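/- Let n ∈ ℕ, k ∈ ℝ with k ≠ 0, let P : ℝ³ → ℝ be a harmonic function (ΔP = 0 on ℝ³) that is positively homogeneous of degree n (P(t·x) = tⁿ·P(x) for all t > 0, x ∈ ℝ³), and let ψ : (0,∞) → ℝ be C^∞ satisfying ψ''(ρ) + (k² − n(n+1)/ρ²)·ψ(ρ) = 0 for all ρ > 0. Define q(x) := P(x/|x|)·ψ(|x|) on ℝ³ \ {0}. Then |x|·Δ(q/|x|)(x) = −k²·q(x) on ℝ³ \ {0}, and consequently the field M[q] := curl(q·x/|x|) satisfies curl curl M[q] = k²·M[q] and div M[q] = 0 on ℝ³ \ {0}. -/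

import Mathlib

/-!
By homogeneity, `q/|x| = g` with `g(x) = P(x)·h(|x|)` and `h(ρ) = ψ(ρ)/ρ^(n+1)`.
The Laplacian of a product with a radial factor is `h ΔP + 2 (h'/ρ) (x·∇P) + P (h'' + 2h'/ρ)`;
harmonicity and Euler's identity `x·∇P = n P` reduce it to `P (h'' + (2n+2) h'/ρ)`, which the
Riccati–Bessel equation for `ψ = ρ^(n+1) h` turns into `-k² g`.
Since `q x/|x| = g x`, `M[q] = curl w` with `w = g x`, and `Δw = -k² w + 2∇g`. Hence
`div M[q] = 0` and `curl curl M[q] = ∇ div M[q] - Δ curl w = -curl Δw = k² M[q]`,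
because `curl ∇g = 0`.
-/

noncomputable section

open Real Set
open scoped ContDiff

/-- Three-dimensional Euclidean space. -/
abbrev V3 : Type := EuclideanSpace ℝ (Fin 3)
/-- Two-dimensional Euclidean space. -/
abbrev V2 : Type := EuclideanSpace ℝ (Fin 2)

/-- Partial derivative `∂ᵢf` of a scalar function on `ℝ³` (indices `0,1,2` correspond to
`∂₁,∂₂,∂₃`). -/
def pd3 (i : Fin 3) (f : V3 → ℝ) (x : V3) : ℝ := fderiv ℝ f x (EuclideanSpace.single i 1)

/-- Partial derivative `∂ᵢf` of a scalar function on `ℝ²`. -/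
def pd2 (i : Fin 2) (f : V2 → ℝ) (x : V2) : ℝ := fderiv ℝ f x (EuclideanSpace.single i 1)

/-- The curl of a vector field `u = (u₁,u₂,u₃)` on `ℝ³`:
`curl u = (∂₂u₃ − ∂₃u₂, ∂₃u₁ − ∂₁u₃, ∂₁u₂ − ∂₂u₁)`. -/
def curl3 (u : V3 → Fin 3 → ℝ) (x : V3) : Fin 3 → ℝ :=
  ![pd3 1 (fun y => u y 2) x - pd3 2 (fun y => u y 1) x,
    pd3 2 (fun y => u y 0) x - pd3 0 (fun y => u y 2) x,
    pd3 0 (fun y => u y 1) x - pd3 1 (fun y => u y 0) x]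

/-- The divergence `div u = ∂₁u₁ + ∂₂u₂ + ∂₃u₃` of a vector field on `ℝ³`. -/
def div3 (u : V3 → Fin 3 → ℝ) (x : V3) : ℝ :=
  pd3 0 (fun y => u y 0) x + pd3 1 (fun y => u y 1) x + pd3 2 (fun y => u y 2) x

/-- The Laplacian `Δf = ∂₁²f + ∂₂²f + ∂₃²f` of a scalar function on `ℝ³`. -/
def lap3 (f : V3 → ℝ) (x : V3) : ℝ :=
  pd3 0 (pd3 0 f) x + pd3 1 (pd3 1 f) x + pd3 2 (pd3 2 f) x

/-- The gradient of a scalar function on `ℝ³`. -/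
def grad3 (f : V3 → ℝ) (x : V3) : Fin 3 → ℝ := ![pd3 0 f x, pd3 1 f x, pd3 2 f x]

/-- The cross product of two vectors of `ℝ³` (as triples of reals). -/
def cross3 (a b : Fin 3 → ℝ) : Fin 3 → ℝ :=
  ![a 1 * b 2 - a 2 * b 1, a 2 * b 0 - a 0 * b 2, a 0 * b 1 - a 1 * b 0]

/-- The transverse Laplacian `Δ⊥f = ∂₁²f + ∂₂²f` of a scalar function on `ℝ²`. -/
def lapPerp (f : V2 → ℝ) (x : V2) : ℝ := pd2 0 (pd2 0 f) x + pd2 1 (pd2 1 f) x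

/-- The transverse part `x⊥ = (x₁,x₂)` of a point `x = (x₁,x₂,x₃) ∈ ℝ³`. -/
def perp (x : V3) : V2 := WithLp.toLp 2 ![x 0, x 1]

/-- The spherical Debye ansatz `M[q] = curl(q·x/|x|)`. -/
def Msph (q : V3 → ℝ) : V3 → Fin 3 → ℝ := curl3 (fun y => fun i => q y * y i / ‖y‖)

/-- The Debye potential `q(x) = P(x/|x|)·ψ(|x|)` built from a spherical harmonic (the
restriction to the sphere of a homogeneous harmonic polynomial `P`) and a radial
profile `ψ`. -/
def debyePot (P : V3 → ℝ) (ψ : ℝ → ℝ) (x : V3) : ℝ := P (‖x‖⁻¹ • x) * ψ ‖x‖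

section PartialDerivatives

variable {S : Set V3} {f g : V3 → ℝ} {x : V3}

lemma pd3_eqOn (hS : IsOpen S) (h : EqOn f g S) (i : Fin 3) : EqOn (pd3 i f) (pd3 i g) S :=
  fun _ hy => by
    unfold pd3
    rw [Filter.EventuallyEq.fderiv_eq (Filter.eventuallyEq_of_mem (hS.mem_nhds hy) h)]

lemma lap3_eqOn (hS : IsOpen S) (h : EqOn f g S) : EqOn (lap3 f) (lap3 g) S := fun _ hy => by
  simp only [lap3, pd3_eqOn hS (pd3_eqOn hS h _) _ hy]

lemma pd3_of_hasFDerivAt {f' : V3 →L[ℝ] ℝ} (h : HasFDerivAt f f' x) (i : Fin 3) :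
    pd3 i f x = f' (EuclideanSpace.single i 1) := by
  rw [pd3, h.fderiv]

lemma ContDiffOn.differentiableAt_of_isOpen {E F : Type*} [NormedAddCommGroup E]
    [NormedSpace ℝ E] [NormedAddCommGroup F] [NormedSpace ℝ F] {f : E → F} {s : Set E} {y : E}
    (hf : ContDiffOn ℝ ∞ f s) (hs : IsOpen s) (hy : y ∈ s) : DifferentiableAt ℝ f y :=
  (hf.differentiableOn (by simp)).differentiableAt (hs.mem_nhds hy)

lemma ContDiffOn.pd3 (hf : ContDiffOn ℝ ∞ f S) (hS : IsOpen S) (i : Fin 3) :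
    ContDiffOn ℝ ∞ (pd3 i f) S :=
  (hf.fderiv_of_isOpen hS (by simp)).clm_apply contDiffOn_const

lemma pd3_add (hf : DifferentiableAt ℝ f x) (hg : DifferentiableAt ℝ g x) (i : Fin 3) :
    pd3 i (fun y => f y + g y) x = pd3 i f x + pd3 i g x := by
  simp [pd3, fderiv_fun_add hf hg]

lemma pd3_sub (hf : DifferentiableAt ℝ f x) (hg : DifferentiableAt ℝ g x) (i : Fin 3) :
    pd3 i (fun y => f y - g y) x = pd3 i f x - pd3 i g x := by
  simp [pd3, fderiv_fun_sub hf hg]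

lemma pd3_const_mul (hf : DifferentiableAt ℝ f x) (c : ℝ) (i : Fin 3) :
    pd3 i (fun y => c * f y) x = c * pd3 i f x := by
  simp [pd3, fderiv_const_mul hf]

lemma pd3_mul (hf : DifferentiableAt ℝ f x) (hg : DifferentiableAt ℝ g x) (i : Fin 3) :
    pd3 i (fun y => f y * g y) x = pd3 i f x * g x + f x * pd3 i g x := by
  simp [pd3, fderiv_fun_mul hf hg]; ring

lemma pd3_const (c : ℝ) (i : Fin 3) : pd3 i (fun _ => c) x = 0 := by
  simp [pd3]

lemma hasFDerivAt_coord (j : Fin 3) :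
    HasFDerivAt (fun y : V3 => y j) (EuclideanSpace.proj (𝕜 := ℝ) j) x :=
  (EuclideanSpace.proj (𝕜 := ℝ) j).hasFDerivAt

lemma pd3_coord (i j : Fin 3) : pd3 i (fun y : V3 => y j) x = if i = j then 1 else 0 := by
  simp [pd3_of_hasFDerivAt (hasFDerivAt_coord j), eq_comm]

lemma pd3_comm (hf : ContDiffOn ℝ ∞ f S) (hS : IsOpen S) (hx : x ∈ S) (i j : Fin 3) :
    pd3 i (pd3 j f) x = pd3 j (pd3 i f) x := by
  have hfx : ContDiffAt ℝ ∞ f x := hf.contDiffAt (hS.mem_nhds hx)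
  have hd : DifferentiableAt ℝ (fderiv ℝ f) x :=
    (hfx.fderiv_right (m := 1) (by decide)).differentiableAt (by decide)
  have hsecond : ∀ a b : Fin 3, pd3 a (pd3 b f) x =
      fderiv ℝ (fderiv ℝ f) x (EuclideanSpace.single a 1) (EuclideanSpace.single b 1) := by
    intro a b
    unfold pd3
    rw [fderiv_clm_apply hd (differentiableAt_const _)]
    simp
  rw [hsecond, hsecond]
  exact hfx.isSymmSndFDerivAt (by simp; decide) _ _

lemma lap3_eq_sum (f : V3 → ℝ) (x : V3) : lap3 f x = ∑ i, pd3 i (pd3 i f) x := by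
  simp [lap3, Fin.sum_univ_three]

lemma pd3_pd3_mul (hf : ContDiffOn ℝ ∞ f S) (hg : ContDiffOn ℝ ∞ g S) (hS : IsOpen S)
    (hx : x ∈ S) (i : Fin 3) :
    pd3 i (pd3 i fun y => f y * g y) x =
      pd3 i (pd3 i f) x * g x + 2 * (pd3 i f x * pd3 i g x) + f x * pd3 i (pd3 i g) x := by
  have hdiff {h : V3 → ℝ} (hh : ContDiffOn ℝ ∞ h S) : DifferentiableAt ℝ h x :=
    hh.differentiableAt_of_isOpen hS hx
  have hfirst :
      EqOn (pd3 i fun y => f y * g y) (fun y => pd3 i f y * g y + f y * pd3 i g y) S :=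
    fun y hy => pd3_mul (hf.differentiableAt_of_isOpen hS hy)
      (hg.differentiableAt_of_isOpen hS hy) i
  rw [pd3_eqOn hS hfirst i hx, pd3_add ((hdiff (hf.pd3 hS i)).fun_mul (hdiff hg))
      ((hdiff hf).fun_mul (hdiff (hg.pd3 hS i))),
    pd3_mul (hdiff (hf.pd3 hS i)) (hdiff hg), pd3_mul (hdiff hf) (hdiff (hg.pd3 hS i))]
  ring

lemma lap3_mul (hf : ContDiffOn ℝ ∞ f S) (hg : ContDiffOn ℝ ∞ g S) (hS : IsOpen S)
    (hx : x ∈ S) :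
    lap3 (fun y => f y * g y) x =
      lap3 f x * g x + 2 * ∑ i, pd3 i f x * pd3 i g x + f x * lap3 g x := by
  simp only [lap3_eq_sum, pd3_pd3_mul hf hg hS hx, Finset.sum_add_distrib, Finset.sum_mul,
    Finset.mul_sum]

end PartialDerivatives

lemma hasFDerivAt_norm_of_ne_zero {F : Type*} [NormedAddCommGroup F] [InnerProductSpace ℝ F]
    {x : F} (hx : x ≠ 0) : HasFDerivAt (fun y : F => ‖y‖) (‖x‖⁻¹ • innerSL ℝ x) x := by
  have hsq : ‖x‖ ^ 2 ≠ 0 := by positivity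
  have h := (Real.hasDerivAt_sqrt hsq).comp_hasFDerivAt x
    (hasStrictFDerivAt_norm_sq x).hasFDerivAt
  simp only [Function.comp_def, Real.sqrt_sq (norm_nonneg _)] at h
  refine h.congr_fderiv ?_
  ext v
  simp
  field_simp

section Radial

variable {x : V3} {φ : ℝ → ℝ}

lemma pd3_comp_norm {φ' : ℝ} (hx : x ≠ 0) (hφ : HasDerivAt φ φ' ‖x‖) (i : Fin 3) :
    pd3 i (fun y => φ ‖y‖) x = φ' / ‖x‖ * x i := by
  have h : HasFDerivAt (fun y : V3 => φ ‖y‖) (φ' • ‖x‖⁻¹ • innerSL ℝ x) x :=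
    hφ.comp_hasFDerivAt x (hasFDerivAt_norm_of_ne_zero hx)
  simp [pd3_of_hasFDerivAt h, EuclideanSpace.inner_single_right]
  ring

lemma DifferentiableAt.comp_norm (hφ : DifferentiableAt ℝ φ ‖x‖) (hx : x ≠ 0) :
    DifferentiableAt ℝ (fun y : V3 => φ ‖y‖) x :=
  hφ.comp x (hasFDerivAt_norm_of_ne_zero hx).differentiableAt

lemma ContDiffOn.comp_norm (hφ : ContDiffOn ℝ ∞ φ (Ioi 0)) :
    ContDiffOn ℝ ∞ (fun y : V3 => φ ‖y‖) {0}ᶜ :=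
  hφ.comp (contDiffOn_id.norm ℝ fun _ hy => hy) fun _ hy => norm_pos_iff.mpr hy

lemma lap3_comp_norm (hφ : ContDiffOn ℝ ∞ φ (Ioi 0)) (hx : x ≠ 0) :
    lap3 (fun y => φ ‖y‖) x = deriv (deriv φ) ‖x‖ + 2 * deriv φ ‖x‖ / ‖x‖ := by
  have hr : 0 < ‖x‖ := norm_pos_iff.mpr hx
  have hφ' : ∀ ρ ∈ Ioi (0 : ℝ), HasDerivAt φ (deriv φ ρ) ρ := fun ρ hρ =>
    (hφ.differentiableAt_of_isOpen isOpen_Ioi hρ).hasDerivAt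
  have hφ'' : HasDerivAt (deriv φ) (deriv (deriv φ) ‖x‖) ‖x‖ :=
    ((hφ.deriv_of_isOpen isOpen_Ioi (by decide)).differentiableAt_of_isOpen isOpen_Ioi
      hr).hasDerivAt
  have hgrad : ∀ i, EqOn (pd3 i fun y => φ ‖y‖) (fun y => deriv φ ‖y‖ / ‖y‖ * y i) {0}ᶜ :=
    fun i y hy => pd3_comp_norm hy (hφ' _ (norm_pos_iff.mpr hy)) i
  have hquot : HasDerivAt (fun ρ => deriv φ ρ / ρ)
      ((deriv (deriv φ) ‖x‖ * ‖x‖ - deriv φ ‖x‖ * 1) / ‖x‖ ^ 2) ‖x‖ :=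
    hφ''.div (hasDerivAt_id ‖x‖) hr.ne'
  have hsecond : ∀ i, pd3 i (pd3 i fun y => φ ‖y‖) x =
      (deriv (deriv φ) ‖x‖ * ‖x‖ - deriv φ ‖x‖) / ‖x‖ ^ 3 * x i ^ 2 + deriv φ ‖x‖ / ‖x‖ := by
    intro i
    rw [pd3_eqOn isOpen_compl_singleton (hgrad i) i hx,
      pd3_mul (hquot.differentiableAt.comp_norm hx) (hasFDerivAt_coord i).differentiableAt i,
      pd3_comp_norm hx hquot i, pd3_coord, if_pos rfl]
    field_simp
  rw [lap3_eq_sum, Finset.sum_congr rfl fun i _ => hsecond i, Finset.sum_add_distrib,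
    ← Finset.mul_sum, ← EuclideanSpace.real_norm_sq_eq, Finset.sum_const, Finset.card_univ,
    Fintype.card_fin, nsmul_eq_mul]
  field_simp
  ring

end Radial
lemma fderiv_apply_self_of_homogeneous {E : Type*} [NormedAddCommGroup E] [NormedSpace ℝ E]
    {P : E → ℝ} {n : ℕ} (hP : Differentiable ℝ P)
    (hPhom : ∀ t : ℝ, 0 < t → ∀ x, P (t • x) = t ^ n * P x) (x : E) : fderiv ℝ P x x = n * P x := by
  have hray : HasDerivAt (fun t : ℝ => t • x) x 1 := by
    simpa using (hasDerivAt_id (1 : ℝ)).smul_const x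
  have hline : HasDerivAt (fun t : ℝ => P (t • x)) (fderiv ℝ P x x) 1 := by
    simpa [Function.comp_def] using (hP ((1 : ℝ) • x)).hasFDerivAt.comp_hasDerivAt 1 hray
  have hpow : HasDerivAt (fun t : ℝ => t ^ n * P x) (n * P x) 1 := by
    simpa using (hasDerivAt_pow n (1 : ℝ)).mul_const (P x)
  refine hline.unique (hpow.congr_of_eventuallyEq ?_)
  filter_upwards [Ioi_mem_nhds one_pos] with t ht using hPhom t ht x

lemma sum_coord_mul_pd3 (f : V3 → ℝ) (x : V3) : ∑ i, x i * pd3 i f x = fderiv ℝ f x x := by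
  conv_rhs => enter [2]; rw [← (EuclideanSpace.basisFun (Fin 3) ℝ).sum_repr x]
  simp [pd3, map_sum]

lemma lap3_mul_comp_norm_of_harmonic {P : V3 → ℝ} {n : ℕ} {φ : ℝ → ℝ} {x : V3}
    (hP : ContDiff ℝ ∞ P) (hPharm : lap3 P x = 0)
    (hPhom : ∀ t : ℝ, 0 < t → ∀ x : V3, P (t • x) = t ^ n * P x)
    (hφ : ContDiffOn ℝ ∞ φ (Ioi 0)) (hx : x ≠ 0) :
    lap3 (fun y => P y * φ ‖y‖) x =
      P x * (deriv (deriv φ) ‖x‖ + (2 * n + 2) * deriv φ ‖x‖ / ‖x‖) := by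
  have hr : 0 < ‖x‖ := norm_pos_iff.mpr hx
  have hgrad : ∀ i, pd3 i (fun y => φ ‖y‖) x = deriv φ ‖x‖ / ‖x‖ * x i := fun i =>
    pd3_comp_norm hx ((hφ.differentiableAt_of_isOpen isOpen_Ioi hr).hasDerivAt) i
  have heuler : ∑ i, x i * pd3 i P x = n * P x := by
    rw [sum_coord_mul_pd3,
      fderiv_apply_self_of_homogeneous (hP.differentiable (by decide)) hPhom]
  have hsum : ∑ i, pd3 i P x * pd3 i (fun y => φ ‖y‖) x = deriv φ ‖x‖ / ‖x‖ * (n * P x) := by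
    simp only [hgrad, ← heuler, Finset.mul_sum]
    exact Finset.sum_congr rfl fun i _ => by ring
  rw [lap3_mul hP.contDiffOn hφ.comp_norm isOpen_compl_singleton hx, hPharm, hsum,
    lap3_comp_norm hφ hx]
  ring

lemma hasDerivAt_div_pow_succ {f : ℝ → ℝ} {f' ρ : ℝ} (hf : HasDerivAt f f' ρ) (hρ : ρ ≠ 0)
    (m : ℕ) : HasDerivAt (fun s => f s / s ^ (m + 1))
      (f' / ρ ^ (m + 1) - (m + 1) * (f ρ / ρ ^ (m + 2))) ρ := by
  refine (hf.fun_div (hasDerivAt_pow (m + 1) ρ) (pow_ne_zero _ hρ)).congr_deriv ?_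
  rw [Nat.add_sub_cancel]
  field_simp
  push_cast
  ring

lemma ContDiffOn.div_pow {f : ℝ → ℝ} (hf : ContDiffOn ℝ ∞ f (Ioi 0)) (m : ℕ) :
    ContDiffOn ℝ ∞ (fun ρ => f ρ / ρ ^ m) (Ioi 0) :=
  hf.div (contDiffOn_id.pow m) fun _ hρ => pow_ne_zero m (ne_of_gt hρ)

lemma riccatiBessel_div_pow {ψ : ℝ → ℝ} {n : ℕ} {k ρ : ℝ} (hψ : ContDiffOn ℝ ∞ ψ (Ioi 0))
    (hρ : 0 < ρ) (hψode : deriv (deriv ψ) ρ + (k ^ 2 - n * (n + 1) / ρ ^ 2) * ψ ρ = 0) :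
    deriv (deriv fun s => ψ s / s ^ (n + 1)) ρ +
      (2 * n + 2) * deriv (fun s => ψ s / s ^ (n + 1)) ρ / ρ = -k ^ 2 * (ψ ρ / ρ ^ (n + 1)) := by
  have hψ' : ∀ s ∈ Ioi (0 : ℝ), HasDerivAt ψ (deriv ψ s) s := fun s hs =>
    (hψ.differentiableAt_of_isOpen isOpen_Ioi hs).hasDerivAt
  have hψ'' : HasDerivAt (deriv ψ) (deriv (deriv ψ) ρ) ρ :=
    ((hψ.deriv_of_isOpen isOpen_Ioi (by decide)).differentiableAt_of_isOpen isOpen_Ioi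
      hρ).hasDerivAt
  have hfirst : EqOn (deriv fun s => ψ s / s ^ (n + 1))
      (fun s => deriv ψ s / s ^ (n + 1) - (n + 1) * (ψ s / s ^ (n + 2))) (Ioi 0) :=
    fun s hs => (hasDerivAt_div_pow_succ (hψ' s hs) (ne_of_gt hs) n).deriv
  have hsecond := ((hasDerivAt_div_pow_succ hψ'' hρ.ne' n).sub
    ((hasDerivAt_div_pow_succ (hψ' ρ hρ) hρ.ne' (n + 1)).const_mul ((n : ℝ) + 1)))
    |>.congr_of_eventuallyEq (Filter.eventuallyEq_of_mem (Ioi_mem_nhds hρ) hfirst)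
  rw [hsecond.deriv, hfirst hρ]
  have hψ''ρ : deriv (deriv ψ) ρ = -(k ^ 2 - n * (n + 1) / ρ ^ 2) * ψ ρ := by linarith
  rw [hψ''ρ]
  beta_reduce
  field_simp
  push_cast
  ring

lemma lap3_mul_riccatiBessel_div_pow {P : V3 → ℝ} {ψ : ℝ → ℝ} {n : ℕ} {k : ℝ} {x : V3}
    (hP : ContDiff ℝ ∞ P) (hPharm : lap3 P x = 0)
    (hPhom : ∀ t : ℝ, 0 < t → ∀ x : V3, P (t • x) = t ^ n * P x)
    (hψ : ContDiffOn ℝ ∞ ψ (Ioi 0))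
    (hψode : deriv (deriv ψ) ‖x‖ + (k ^ 2 - n * (n + 1) / ‖x‖ ^ 2) * ψ ‖x‖ = 0) (hx : x ≠ 0) :
    lap3 (fun y => P y * (ψ ‖y‖ / ‖y‖ ^ (n + 1))) x = -k ^ 2 * (P x * (ψ ‖x‖ / ‖x‖ ^ (n + 1))) := by
  rw [lap3_mul_comp_norm_of_harmonic hP hPharm hPhom (hψ.div_pow (n + 1)) hx,
    riccatiBessel_div_pow hψ (norm_pos_iff.mpr hx) hψode]
  ring

def vlap3 (u : V3 → Fin 3 → ℝ) (x : V3) : Fin 3 → ℝ := fun j => lap3 (fun y => u y j) x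

lemma curl3_apply (u : V3 → Fin 3 → ℝ) (x : V3) (i : Fin 3) :
    curl3 u x i =
      pd3 (i + 1) (fun y => u y (i + 2)) x - pd3 (i + 2) (fun y => u y (i + 1)) x := by
  fin_cases i <;> rfl

lemma grad3_apply (f : V3 → ℝ) (x : V3) (i : Fin 3) : grad3 f x i = pd3 i f x := by
  fin_cases i <;> rfl

section VectorCalculus

variable {S : Set V3} {u v : V3 → Fin 3 → ℝ} {f : V3 → ℝ} {x : V3}

lemma lap3_sub {g : V3 → ℝ} (hf : ContDiffOn ℝ ∞ f S) (hg : ContDiffOn ℝ ∞ g S)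
    (hS : IsOpen S) (hx : x ∈ S) : lap3 (fun y => f y - g y) x = lap3 f x - lap3 g x := by
  have hsub : ∀ i, EqOn (pd3 i fun y => f y - g y) (fun y => pd3 i f y - pd3 i g y) S :=
    fun i y hy => pd3_sub (hf.differentiableAt_of_isOpen hS hy)
      (hg.differentiableAt_of_isOpen hS hy) i
  simp only [lap3_eq_sum, pd3_eqOn hS (hsub _) _ hx,
    pd3_sub ((hf.pd3 hS _).differentiableAt_of_isOpen hS hx)
      ((hg.pd3 hS _).differentiableAt_of_isOpen hS hx), Finset.sum_sub_distrib]

lemma lap3_pd3 (hf : ContDiffOn ℝ ∞ f S) (hS : IsOpen S) (hx : x ∈ S) (j : Fin 3) :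
    lap3 (pd3 j f) x = pd3 j (lap3 f) x := by
  have hcomm : ∀ i, pd3 i (pd3 i (pd3 j f)) x = pd3 j (pd3 i (pd3 i f)) x := fun i => by
    rw [pd3_eqOn hS (fun y hy => pd3_comm hf hS hy i j) i hx, pd3_comm (hf.pd3 hS i) hS hx]
  have hd : ∀ i, DifferentiableAt ℝ (pd3 i (pd3 i f)) x := fun i =>
    ((hf.pd3 hS i).pd3 hS i).differentiableAt_of_isOpen hS hx
  show _ = pd3 j (fun y => pd3 0 (pd3 0 f) y + pd3 1 (pd3 1 f) y + pd3 2 (pd3 2 f) y) x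
  rw [lap3, hcomm, hcomm, hcomm, pd3_add ((hd 0).fun_add (hd 1)) (hd 2),
    pd3_add (hd 0) (hd 1)]

lemma lap3_mul_coord (hf : ContDiffOn ℝ ∞ f S) (hS : IsOpen S) (hx : x ∈ S) (j : Fin 3) :
    lap3 (fun y => f y * y j) x = lap3 f x * x j + 2 * pd3 j f x := by
  have hcoord : ContDiff ℝ ∞ fun y : V3 => y j := (EuclideanSpace.proj (𝕜 := ℝ) j).contDiff
  have hlap : lap3 (fun y : V3 => y j) x = 0 := by
    have hconst : ∀ i, (pd3 i fun y : V3 => y j) = fun _ => if i = j then 1 else 0 :=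
      fun i => funext fun _ => pd3_coord i j
    simp only [lap3_eq_sum, hconst, pd3_const, Finset.sum_const_zero]
  rw [lap3_mul hf hcoord.contDiffOn hS hx, hlap]
  simp [pd3_coord]

lemma ContDiffOn.curl3 (hu : ContDiffOn ℝ ∞ u S) (hS : IsOpen S) :
    ContDiffOn ℝ ∞ (curl3 u) S := by
  refine contDiffOn_pi.2 fun i => ?_
  simp only [curl3_apply]
  exact ((contDiffOn_pi.1 hu _).pd3 hS _).sub ((contDiffOn_pi.1 hu _).pd3 hS _)

lemma ContDiffOn.grad3 (hf : ContDiffOn ℝ ∞ f S) (hS : IsOpen S) :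
    ContDiffOn ℝ ∞ (grad3 f) S := by
  refine contDiffOn_pi.2 fun i => ?_
  simp only [grad3_apply]
  exact hf.pd3 hS i

lemma grad3_eqOn {g : V3 → ℝ} (hS : IsOpen S) (h : EqOn f g S) : EqOn (grad3 f) (grad3 g) S :=
  fun _ hy => funext fun i => by simp only [grad3_apply, pd3_eqOn hS h i hy]

lemma curl3_eqOn (hS : IsOpen S) (h : EqOn u v S) : EqOn (curl3 u) (curl3 v) S :=
  fun _ hy => funext fun i => by
    simp only [curl3_apply, pd3_eqOn hS (fun z hz => congrFun (h hz) _) _ hy]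

lemma div3_eqOn (hS : IsOpen S) (h : EqOn u v S) : EqOn (div3 u) (div3 v) S :=
  fun _ hy => by simp only [div3, pd3_eqOn hS (fun z hz => congrFun (h hz) _) _ hy]

lemma pd3_curl3 (hu : ContDiffOn ℝ ∞ u S) (hS : IsOpen S) (hx : x ∈ S) (a i : Fin 3) :
    pd3 a (fun y => curl3 u y i) x = pd3 a (pd3 (i + 1) fun y => u y (i + 2)) x -
      pd3 a (pd3 (i + 2) fun y => u y (i + 1)) x := by
  simp only [curl3_apply]
  exact pd3_sub (((contDiffOn_pi.1 hu _).pd3 hS _).differentiableAt_of_isOpen hS hx)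
    (((contDiffOn_pi.1 hu _).pd3 hS _).differentiableAt_of_isOpen hS hx) a

lemma div3_curl3 (hu : ContDiffOn ℝ ∞ u S) (hS : IsOpen S) (hx : x ∈ S) :
    div3 (curl3 u) x = 0 := by
  have hu' := contDiffOn_pi.1 hu
  simp only [div3, pd3_curl3 hu hS hx, Fin.reduceAdd]
  rw [pd3_comm (hu' 2) hS hx 0 1, pd3_comm (hu' 1) hS hx 0 2, pd3_comm (hu' 0) hS hx 1 2]
  ring

lemma curl3_grad3 (hf : ContDiffOn ℝ ∞ f S) (hS : IsOpen S) (hx : x ∈ S) :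
    curl3 (grad3 f) x = 0 := funext fun i => by
  simp only [curl3_apply, grad3_apply, pd3_comm hf hS hx (i + 1), sub_self, Pi.zero_apply]

lemma curl3_smul_add_smul (hu : DifferentiableAt ℝ u x) (hv : DifferentiableAt ℝ v x)
    (a b : ℝ) : curl3 (fun y => a • u y + b • v y) x = a • curl3 u x + b • curl3 v x := by
  have hu' := differentiableAt_pi.1 hu
  have hv' := differentiableAt_pi.1 hv
  funext i
  simp only [curl3_apply, Pi.add_apply, Pi.smul_apply, smul_eq_mul]
  rw [pd3_add ((hu' _).const_mul a) ((hv' _).const_mul b),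
    pd3_add ((hu' _).const_mul a) ((hv' _).const_mul b), pd3_const_mul (hu' _),
    pd3_const_mul (hv' _), pd3_const_mul (hu' _), pd3_const_mul (hv' _)]
  ring

lemma vlap3_curl3 (hu : ContDiffOn ℝ ∞ u S) (hS : IsOpen S) (hx : x ∈ S) :
    vlap3 (curl3 u) x = curl3 (vlap3 u) x := funext fun i => by
  have hu' := contDiffOn_pi.1 hu
  simp only [vlap3, curl3_apply]
  rw [lap3_sub ((hu' _).pd3 hS _) ((hu' _).pd3 hS _) hS hx, lap3_pd3 (hu' _) hS hx,
    lap3_pd3 (hu' _) hS hx]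

lemma curl3_curl3 (hu : ContDiffOn ℝ ∞ u S) (hS : IsOpen S) (hx : x ∈ S) :
    curl3 (curl3 u) x = grad3 (div3 u) x - vlap3 u x := by
  have hu' := contDiffOn_pi.1 hu
  have hd : ∀ a b, DifferentiableAt ℝ (pd3 a fun y => u y b) x := fun a b =>
    ((hu' b).pd3 hS a).differentiableAt_of_isOpen hS hx
  have hcomm : ∀ a b c, pd3 a (pd3 b fun y => u y c) x = pd3 b (pd3 a fun y => u y c) x :=
    fun a b c => pd3_comm (hu' c) hS hx a b
  have hdiv : ∀ a, pd3 a (div3 u) x = pd3 a (pd3 0 fun y => u y 0) x +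
      pd3 a (pd3 1 fun y => u y 1) x + pd3 a (pd3 2 fun y => u y 2) x := fun a => by
    rw [← pd3_add (hd 0 0) (hd 1 1), ← pd3_add ((hd 0 0).fun_add (hd 1 1)) (hd 2 2)]
    rfl
  funext i
  rw [curl3_apply, pd3_curl3 hu hS hx, pd3_curl3 hu hS hx]
  fin_cases i <;>
    simp only [Fin.zero_eta, Fin.mk_one, Fin.reduceFinMk, Fin.reduceAdd, Pi.sub_apply,
      grad3_apply, hdiv, vlap3, lap3] <;>
    linarith [hcomm 0 1 1, hcomm 0 2 2, hcomm 1 0 0, hcomm 1 2 2, hcomm 2 0 0, hcomm 2 1 1]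

end VectorCalculus

lemma ContDiffOn.mul_coord {S : Set V3} {g : V3 → ℝ} (hg : ContDiffOn ℝ ∞ g S) :
    ContDiffOn ℝ ∞ (fun y j => g y * y j) S :=
  contDiffOn_pi.2 fun j => hg.mul (EuclideanSpace.proj (𝕜 := ℝ) j).contDiff.contDiffOn

theorem curl3_curl3_curl3_of_helmholtz {S : Set V3} {g : V3 → ℝ} {k : ℝ} {x : V3}
    (hg : ContDiffOn ℝ ∞ g S) (hS : IsOpen S) (hHelm : ∀ y ∈ S, lap3 g y = -k ^ 2 * g y)
    (hx : x ∈ S) :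
    curl3 (curl3 (curl3 fun y j => g y * y j)) x = k ^ 2 • curl3 (fun y j => g y * y j) x := by
  set w : V3 → Fin 3 → ℝ := fun y j => g y * y j
  have hw : ContDiffOn ℝ ∞ w S := hg.mul_coord
  have hdiv : EqOn (div3 (curl3 w)) (fun _ => 0) S := fun y hy => div3_curl3 hw hS hy
  have hlap : EqOn (vlap3 w) (fun y => (-k ^ 2) • w y + (2 : ℝ) • grad3 g y) S :=
    fun y hy => funext fun j => by
      simp only [vlap3, w, lap3_mul_coord hg hS hy, hHelm y hy, grad3_apply, Pi.add_apply,
        Pi.smul_apply, smul_eq_mul]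
      ring
  calc curl3 (curl3 (curl3 w)) x = grad3 (div3 (curl3 w)) x - vlap3 (curl3 w) x :=
        curl3_curl3 (hw.curl3 hS) hS hx
    _ = -curl3 (fun y => (-k ^ 2) • w y + (2 : ℝ) • grad3 g y) x := by
        have hgrad0 : grad3 (fun _ => (0 : ℝ)) x = 0 := funext fun i => by
          rw [grad3_apply, pd3_const, Pi.zero_apply]
        rw [grad3_eqOn hS hdiv hx, hgrad0, vlap3_curl3 hw hS hx, curl3_eqOn hS hlap hx,
          zero_sub]
    _ = k ^ 2 • curl3 w x := by
        rw [curl3_smul_add_smul (hw.differentiableAt_of_isOpen hS hx)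
          ((hg.grad3 hS).differentiableAt_of_isOpen hS hx), curl3_grad3 hg hS hx]
        simp

lemma debyePot_div_norm {P : V3 → ℝ} {n : ℕ} (ψ : ℝ → ℝ)
    (hPhom : ∀ t : ℝ, 0 < t → ∀ x : V3, P (t • x) = t ^ n * P x) {x : V3} (hx : x ≠ 0) :
    debyePot P ψ x / ‖x‖ = P x * (ψ ‖x‖ / ‖x‖ ^ (n + 1)) := by
  have hr : 0 < ‖x‖ := norm_pos_iff.mpr hx
  rw [debyePot, hPhom _ (inv_pos.mpr hr), inv_pow]
  field_simp
  ring

theorem spherical_debye_mode_general (n : ℕ) (k : ℝ)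
    (P : V3 → ℝ) (hP : ContDiff ℝ ∞ P) (hPharm : ∀ x : V3, lap3 P x = 0)
    (hPhom : ∀ t : ℝ, 0 < t → ∀ x : V3, P (t • x) = t ^ n * P x)
    (ψ : ℝ → ℝ) (hψ : ContDiffOn ℝ ∞ ψ (Set.Ioi (0 : ℝ)))
    (hψode : ∀ ρ : ℝ, 0 < ρ →
      deriv (deriv ψ) ρ + (k ^ 2 - n * (n + 1) / ρ ^ 2) * ψ ρ = 0) :
    ∀ x : V3, x ≠ 0 →
      ‖x‖ * lap3 (fun z => debyePot P ψ z / ‖z‖) x = -k ^ 2 * debyePot P ψ x ∧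
      curl3 (curl3 (Msph (debyePot P ψ))) x =
        (fun i => k ^ 2 * Msph (debyePot P ψ) x i) ∧
      div3 (Msph (debyePot P ψ)) x = 0 := by
  intro x hx
  have hS : IsOpen ({0}ᶜ : Set V3) := isOpen_compl_singleton
  set g : V3 → ℝ := fun y => P y * (ψ ‖y‖ / ‖y‖ ^ (n + 1))
  have hg : ContDiffOn ℝ ∞ g {0}ᶜ := hP.contDiffOn.mul (hψ.div_pow (n + 1)).comp_norm
  have hHelm : ∀ y ∈ ({0}ᶜ : Set V3), lap3 g y = -k ^ 2 * g y := fun y hy =>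
    lap3_mul_riccatiBessel_div_pow hP (hPharm y) hPhom hψ (hψode _ (norm_pos_iff.mpr hy)) hy
  have hqg : EqOn (fun z => debyePot P ψ z / ‖z‖) g {0}ᶜ := fun _ hy =>
    debyePot_div_norm ψ hPhom hy
  have hM : EqOn (fun y i => debyePot P ψ y * y i / ‖y‖) (fun y j => g y * y j) {0}ᶜ :=
    fun y hy => funext fun i => by
      show debyePot P ψ y * y i / ‖y‖ = g y * y i
      rw [mul_div_right_comm, debyePot_div_norm ψ hPhom hy]
  refine ⟨?_, ?_, ?_⟩
  · rw [lap3_eqOn hS hqg hx, hHelm x hx, ← hqg hx]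
    field_simp [norm_ne_zero_iff.mpr hx]
  · rw [Msph, curl3_eqOn hS (curl3_eqOn hS (curl3_eqOn hS hM)) hx, curl3_eqOn hS hM hx]
    exact curl3_curl3_curl3_of_helmholtz hg hS hHelm hx
  · rw [Msph, div3_eqOn hS (curl3_eqOn hS hM) hx]
    exact div3_curl3 hg.mul_coord hS hx

/-- if `P` is harmonic and positively homogeneous of degree `n` and `ψ`
solves the Riccati–Bessel equation `ψ'' + (k² − n(n+1)/ρ²)ψ = 0`, then the potential
`q(x) = P(x/|x|)·ψ(|x|)` satisfies `|x|·Δ(q/|x|) = −k²q` on `ℝ³ \ {0}`, and consequently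
`M[q] = curl(q·x/|x|)` satisfies `curl curl M[q] = k²·M[q]` and `div M[q] = 0` there. -/
theorem spherical_debye_mode (n : ℕ) (k : ℝ) (hk : k ≠ 0)
    (P : V3 → ℝ) (hP : ContDiff ℝ ∞ P) (hPharm : ∀ x : V3, lap3 P x = 0)
    (hPhom : ∀ t : ℝ, 0 < t → ∀ x : V3, P (t • x) = t ^ n * P x)
    (ψ : ℝ → ℝ) (hψ : ContDiffOn ℝ ∞ ψ (Set.Ioi (0 : ℝ)))
    (hψode : ∀ ρ : ℝ, 0 < ρ →
      deriv (deriv ψ) ρ + (k ^ 2 - n * (n + 1) / ρ ^ 2) * ψ ρ = 0) :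
    ∀ x : V3, x ≠ 0 →
      ‖x‖ * lap3 (fun z => debyePot P ψ z / ‖z‖) x = -k ^ 2 * debyePot P ψ x ∧
      curl3 (curl3 (Msph (debyePot P ψ))) x =
        (fun i => k ^ 2 * Msph (debyePot P ψ) x i) ∧
      div3 (Msph (debyePot P ψ)) x = 0 :=
  spherical_debye_mode_general n k P hP hPharm hPhom ψ hψ hψode

end
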